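/- If a partial function f on Baire space is (continuously) Weihrauch reducible to LPO, then the level of f is at most 2, i.e. L_2(f) = ∅. -/

import Mathlib

/-!
The realizer `G` of a reduction to `LPO` splits `dom f` into the relatively open set where
`G x ≠ 0^ℕ` and its relative complement. On each piece the oracle answer is constant, so `f`
is continuous there; a function continuous on a relatively open piece and on its complement
is continuous at every point of the open piece, hence `L_1(f)` lies in the closed piece, on
which `f` is continuous, and `L_2(f) = ∅`.
-/

abbrev Baire : Type := ℕ → ℕ

/-- Continuous Weihrauch reducibility between partial functions on Baire space,
given as a total function together with its domain. -/
def WLE (f : Baire → Baire) (domf : Set Baire)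
    (g : Baire → Baire) (domg : Set Baire) : Prop :=
  ∃ (G : Baire → Baire) (F : Baire × Baire → Baire),
    ContinuousOn G domf ∧
    Set.MapsTo G domf domg ∧
    ContinuousOn F ((fun x => (x, g (G x))) '' domf) ∧
    ∀ x ∈ domf, f x = F (x, g (G x))

open Classical in
/-- LPO(0^ℕ) = 0^ℕ and LPO(w) = 1,0,0,… for w ≠ 0^ℕ. -/
noncomputable def LPO : Baire → Baire := fun w =>
  if w = (fun _ => 0) then (fun _ => 0) else (fun k => if k = 0 then 1 else 0)

/-- The level sets of a partial function: L_0(f) = dom f and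
L_{i+1}(f) = {x ∈ L_i(f) : f restricted to L_i(f) is not continuous at x}. -/
def lev {X Y : Type*} [TopologicalSpace X] [TopologicalSpace Y]
    (f : X → Y) (D : Set X) : ℕ → Set X
  | 0 => D
  | (i + 1) => {x ∈ lev f D i | ¬ ContinuousWithinAt f (lev f D i) x}

section

variable {X Y Z : Type*} [TopologicalSpace X] [TopologicalSpace Y] [TopologicalSpace Z]

theorem continuousOn_of_eq_apply_prodMk_const {f : X → Z} {F : X × Y → Z} {S : Set (X × Y)}
    (hF : ContinuousOn F S) {A : Set X} {c : Y} (hAS : ∀ x ∈ A, (x, c) ∈ S)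
    (hf : ∀ x ∈ A, f x = F (x, c)) : ContinuousOn f A :=
  (hF.comp (continuous_id.prodMk continuous_const).continuousOn hAS).congr hf

theorem lev_two_eq_empty_of_continuousOn_inter_of_continuousOn_diff {f : X → Y} {D U : Set X}
    (hU : IsOpen U) (hfU : ContinuousOn f (D ∩ U)) (hfD : ContinuousOn f (D \ U)) :
    lev f D 2 = ∅ := by
  have hlev_one : lev f D 1 ⊆ D \ U := fun x ⟨hxD, hx⟩ => ⟨hxD, fun hxU =>
    hx ((hfU x ⟨hxD, hxU⟩).mono_of_mem_nhdsWithin (inter_mem_nhdsWithin D (hU.mem_nhds hxU)))⟩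
  exact Set.eq_empty_of_forall_notMem fun x ⟨hx₁, hx⟩ => hx ((hfD x (hlev_one hx₁)).mono hlev_one)

end

theorem WLE.exists_continuousOn_fiber {f g : Baire → Baire} {domf domg : Set Baire}
    (h : WLE f domf g domg) :
    ∃ G : Baire → Baire, ContinuousOn G domf ∧
      ∀ c, ContinuousOn f {x ∈ domf | g (G x) = c} := by
  obtain ⟨G, F, hG, -, hF, hf⟩ := h
  refine ⟨G, hG, fun c => continuousOn_of_eq_apply_prodMk_const (c := c) hF ?_ ?_⟩
  · rintro x ⟨hx, rfl⟩
    exact ⟨x, hx, rfl⟩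
  · rintro x ⟨hx, rfl⟩
    exact hf x hx

theorem LPO_of_eq_zero {w : Baire} (hw : w = fun _ => 0) : LPO w = fun _ => 0 := if_pos hw

theorem LPO_of_ne_zero {w : Baire} (hw : w ≠ fun _ => 0) :
    LPO w = fun k => if k = 0 then 1 else 0 := if_neg hw

theorem le_lpo_level_le_two (f : Baire → Baire) (domf : Set Baire)
    (h : WLE f domf LPO Set.univ) : lev f domf 2 = ∅ := by
  obtain ⟨G, hG, hfiber⟩ := h.exists_continuousOn_fiber
  obtain ⟨U, hU, hGU⟩ := continuousOn_iff'.1 hG {fun _ => 0}ᶜ isOpen_compl_singleton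
  have hmemU {x} (hx : x ∈ domf) : x ∈ U ↔ G x ≠ fun _ => 0 := by
    simpa [hx] using (Set.ext_iff.1 hGU x).symm
  exact lev_two_eq_empty_of_continuousOn_inter_of_continuousOn_diff hU
    ((hfiber _).mono fun x ⟨hx, hxU⟩ => ⟨hx, LPO_of_ne_zero ((hmemU hx).1 hxU)⟩)
    ((hfiber _).mono fun x ⟨hx, hxU⟩ => ⟨hx, LPO_of_eq_zero (not_not.1 (mt (hmemU hx).2 hxU))⟩)
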